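/- Up to the affine equivalence f(x) ∼ f(xM + a) + c with M ∈ GL(2, 𝔽₂), a ∈ 𝔽₂² and c ∈ ℤ₄, there are exactly 2 equivalence classes of regular bent generalized Boolean functions from 𝔽₂² to ℤ₄. -/

import Mathlib

open Finset Matrix

/-- Dot product on 𝔽₂ⁿ. -/
def dotp {n : ℕ} (u x : Fin n → ZMod 2) : ZMod 2 := ∑ j, u j * x j

/-- The character (−1)^{u·x}. -/
def chi {n : ℕ} (u x : Fin n → ZMod 2) : ℤ := (-1) ^ (dotp u x).val

/-- Walsh–Hadamard transform of a quaternary generalized Boolean function. -/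
noncomputable def Wq {n : ℕ} (f : (Fin n → ZMod 2) → ZMod 4) (u : Fin n → ZMod 2) : ℂ :=
  ∑ x : Fin n → ZMod 2, (chi u x : ℂ) * Complex.I ^ (f x).val

/-- A quaternary generalized Boolean function is bent. -/
def IsQBent {n : ℕ} (f : (Fin n → ZMod 2) → ZMod 4) : Prop :=
  ∀ u, ‖Wq f u‖ = Real.sqrt 2 ^ n

/-- A quaternary generalized Boolean function is regular bent. -/
def IsQRegularBent {n : ℕ} (f : (Fin n → ZMod 2) → ZMod 4) : Prop :=
  IsQBent f ∧ ∃ fhat : (Fin n → ZMod 2) → ZMod 4,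
    ∀ u, Wq f u = (Real.sqrt 2 : ℂ) ^ n * Complex.I ^ (fhat u).val

/-- Affine equivalence of quaternary generalized Boolean functions:
`g ∼ f` when `g(x) = f(xM + a) + c` for some invertible `M`, `a ∈ 𝔽₂ⁿ`, `c ∈ ℤ₄`. -/
def AffEquiv {n : ℕ} (f g : (Fin n → ZMod 2) → ZMod 4) : Prop :=
  ∃ M : Matrix (Fin n) (Fin n) (ZMod 2), IsUnit M ∧
    ∃ (a : Fin n → ZMod 2) (c : ZMod 4), ∀ x, g x = f (Matrix.vecMul x M + a) + c

/-! Over `𝔽₂²` the Walsh coefficients are Gaussian integers, so regular bentness (every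
coefficient is `2` times a power of `i`) is decidable, and an exhaustive search over the `4⁴`
quaternary functions shows that each regular bent one is affinely equivalent to `2x₀x₁` or to
`x₀ + 2x₀x₁`. These two are inequivalent: whether all values of `f` have the same parity is an
affine invariant, and only the first has it. -/

open Complex

theorem Nat.card_quot_eq_two {α : Type*} {r : α → α → Prop} (hr : Equivalence r) {a b : α}
    (hab : ¬ r a b) (h : ∀ x, r a x ∨ r b x) : Nat.card (Quot r) = 2 := by
  refine Nat.card_eq_two_iff.mpr ⟨Quot.mk r a, Quot.mk r b,
    fun he => hab (hr.eqvGen_iff.mp (Quot.eqvGen_exact he)), Set.eq_univ_of_forall ?_⟩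
  rintro ⟨x⟩
  rcases h x with hx | hx
  · exact .inl (Quot.sound hx).symm
  · exact .inr (Quot.sound hx).symm

section AffineEquivalence

variable {n : ℕ}

theorem affEquiv_equivalence : Equivalence (@AffEquiv n) where
  refl f := ⟨1, isUnit_one, 0, 0, fun x => by simp⟩
  symm := by
    rintro f g ⟨M, hM, a, c, hg⟩
    obtain ⟨N, hMN, hNM⟩ := isUnit_iff_exists.mp hM
    refine ⟨N, isUnit_iff_exists.mpr ⟨M, hNM, hMN⟩, vecMul a N, -c, fun y => ?_⟩
    have hy : vecMul (vecMul y N + vecMul a N) M + a = y := by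
      rw [add_vecMul, vecMul_vecMul, vecMul_vecMul, hNM, vecMul_one, vecMul_one, add_assoc,
        ZModModule.add_self, add_zero]
    rw [hg, hy, add_neg_cancel_right]
  trans := by
    rintro f g h ⟨M, hM, a, c, hg⟩ ⟨N, hN, b, d, hh⟩
    refine ⟨N * M, hN.mul hM, vecMul b M + a, d + c, fun x => ?_⟩
    rw [hh, hg, add_vecMul, ← vecMul_vecMul, add_assoc, add_assoc, add_comm c d]

theorem affEquiv_iff_det_ne_zero (f g : (Fin n → ZMod 2) → ZMod 4) :
    AffEquiv f g ↔ ∃ M : Matrix (Fin n) (Fin n) (ZMod 2), M.det ≠ 0 ∧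
      ∃ (a : Fin n → ZMod 2) (c : ZMod 4), ∀ x, g x = f (vecMul x M + a) + c := by
  simp only [AffEquiv, isUnit_iff_isUnit_det, isUnit_iff_ne_zero]

def HasConstParity (f : (Fin n → ZMod 2) → ZMod 4) : Prop :=
  ∀ x y, Even (f x - f y)

theorem AffEquiv.hasConstParity {f g : (Fin n → ZMod 2) → ZMod 4} (h : AffEquiv f g)
    (hf : HasConstParity f) : HasConstParity g := by
  obtain ⟨M, -, a, c, hg⟩ := h
  intro x y
  rw [hg, hg, add_sub_add_right_eq_sub]
  exact hf _ _

end AffineEquivalence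

section Walsh

variable {n : ℕ}

/-- `Wq` computed in `ℤ[i]`, where equality is decidable. -/
def walshGauss (f : (Fin n → ZMod 2) → ZMod 4) (u : Fin n → ZMod 2) : GaussianInt :=
  ∑ x, (chi u x : GaussianInt) * Zsqrtd.sqrtd ^ (f x).val

theorem toComplex_sqrtd : ((Zsqrtd.sqrtd : GaussianInt) : ℂ) = I := by
  simp [GaussianInt.toComplex_def]

theorem toComplex_walshGauss (f : (Fin n → ZMod 2) → ZMod 4) (u : Fin n → ZMod 2) :
    (walshGauss f u : ℂ) = Wq f u := by
  simp [walshGauss, Wq, toComplex_sqrtd]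

theorem isQRegularBent_iff (f : (Fin n → ZMod 2) → ZMod 4) :
    IsQRegularBent f ↔ ∀ u, ∃ c : ZMod 4, Wq f u = (Real.sqrt 2 : ℂ) ^ n * I ^ c.val := by
  refine ⟨fun ⟨_, fhat, h⟩ u => ⟨fhat u, h u⟩, fun h => ?_⟩
  choose fhat hfhat using h
  exact ⟨fun u => by simp [hfhat u, abs_of_nonneg (Real.sqrt_nonneg 2)], fhat, hfhat⟩

end Walsh

theorem isQRegularBent_iff_walshGauss (f : (Fin 2 → ZMod 2) → ZMod 4) :
    IsQRegularBent f ↔ ∀ u, ∃ c : ZMod 4, walshGauss f u = 2 * Zsqrtd.sqrtd ^ c.val := by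
  have hsqrt : (Real.sqrt 2 : ℂ) ^ 2 = 2 := by
    rw [← ofReal_pow, Real.sq_sqrt zero_le_two, ofReal_ofNat]
  simp only [isQRegularBent_iff, hsqrt, ← GaussianInt.toComplex_inj, toComplex_walshGauss,
    map_mul, map_pow, map_ofNat, toComplex_sqrtd]

def twiceProd (x : Fin 2 → ZMod 2) : ZMod 4 := 2 * ((x 0).val * (x 1).val : ℕ)

def fstAddTwiceProd (x : Fin 2 → ZMod 2) : ZMod 4 := (x 0).val + twiceProd x

theorem isQRegularBent_twiceProd : IsQRegularBent twiceProd :=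
  (isQRegularBent_iff_walshGauss _).mpr (by decide)

theorem isQRegularBent_fstAddTwiceProd : IsQRegularBent fstAddTwiceProd :=
  (isQRegularBent_iff_walshGauss _).mpr (by decide)

theorem hasConstParity_twiceProd : HasConstParity twiceProd := fun x y => by
  rw [twiceProd, twiceProd, ← mul_sub]
  exact even_two_mul _

theorem not_hasConstParity_fstAddTwiceProd : ¬ HasConstParity fstAddTwiceProd := fun h => by
  obtain ⟨r, hr⟩ := h ![1, 0] 0
  revert r
  decide

theorem not_affEquiv_twiceProd_fstAddTwiceProd : ¬ AffEquiv twiceProd fstAddTwiceProd :=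
  fun h => not_hasConstParity_fstAddTwiceProd (h.hasConstParity hasConstParity_twiceProd)

set_option maxRecDepth 100000 in
theorem affEquiv_of_isQRegularBent (f : (Fin 2 → ZMod 2) → ZMod 4) (hf : IsQRegularBent f) :
    AffEquiv twiceProd f ∨ AffEquiv fstAddTwiceProd f := by
  rw [isQRegularBent_iff_walshGauss] at hf
  simp only [affEquiv_iff_det_ne_zero]
  revert f
  decide

/-- up to affine equivalence there are exactly 2 classes of regular
bent quaternary functions in two variables. -/
theorem classes_quaternary_regular_bent_two_vars :
    Nat.card (Quot fun f g : {f : (Fin 2 → ZMod 2) → ZMod 4 // IsQRegularBent f} =>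
      AffEquiv f.1 g.1) = 2 :=
  Nat.card_quot_eq_two (affEquiv_equivalence.comap Subtype.val)
    (a := ⟨twiceProd, isQRegularBent_twiceProd⟩)
    (b := ⟨fstAddTwiceProd, isQRegularBent_fstAddTwiceProd⟩)
    not_affEquiv_twiceProd_fstAddTwiceProd fun f => affEquiv_of_isQRegularBent f.1 f.2
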